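/- Let f : ℝ^d → ℝ be L-smooth, h : ℝ^d → ℝ convex, g_1,...,g_m convex and L-smooth, γ > 0, and define F(x) = f(x) + h(x) + γ·max_k [g_k(x)]_+. Fix x₀, y ∈ ℝ^d and η with η·L(1+γ) ≤ 1/8, and let x̌ minimize over x the function ⟨y, x⟩ + h(x) + γ·max_k [g_k(x₀) + ⟨∇g_k(x₀), x − x₀⟩]_+ + (1/2η)‖x − x₀‖². Define x̂ as the minimizer of u ↦ F(u) + ((1+ηL)/2η)‖u − x₀‖². Then ‖x̂ − x₀‖² ≤ 8η²‖∇f(x₀) − y‖² + 3‖x̌ − x₀‖². -/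

import Mathlib

/-!
The point `xv` minimizes the convex model `Φ`, which is `(1/η)`-strongly convex, so comparing
`Φ xv` with `Φ xh` gains `1/(2η) ‖xh - xv‖²`; the point `xh` minimizes
`F + (1 + ηL)/(2η) ‖· - x₀‖²`, so comparing with `xv` bounds the reverse difference. Adding both,
the smooth parts of `f` and of the `g k` differ from their linearizations at `x₀` by at most
`L/2 ‖· - x₀‖²` (with the linearization below `g k` by convexity), and what remains is
`1/(2η) ‖xh - xv‖² ≤ ⟪∇f(x₀) - y, xv - xh⟫ + L(2 + γ)/2 ‖xv - x₀‖²`.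
Cauchy–Schwarz, AM-GM and the step-size condition then give
`‖xh - xv‖² ≤ 4η²‖∇f(x₀) - y‖² + ‖xv - x₀‖²/2`, and the triangle inequality finishes.
-/

open RealInnerProductSpace

section

variable {E : Type*} [NormedAddCommGroup E] [InnerProductSpace ℝ E]

lemma ConvexOn.finset_sup' {ι : Type*} {s : Set E} {t : Finset ι} (ht : t.Nonempty)
    {φ : ι → E → ℝ} (hφ : ∀ k ∈ t, ConvexOn ℝ s (φ k)) :
    ConvexOn ℝ s (fun x => t.sup' ht fun k => φ k x) := by
  simpa only [← Finset.sup'_apply] using Finset.sup'_induction ht φ (fun _ h₁ _ h₂ => h₁.sup h₂) hφ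

lemma convexOn_inner_add_const {s : Set E} (hs : Convex ℝ s) (v : E) (c : ℝ) :
    ConvexOn ℝ s (fun x => ⟪v, x⟫ + c) :=
  ((innerₛₗ ℝ v).convexOn hs).add_const c

lemma convexOn_sup'_max_zero_const_add_inner_sub {ι : Type*} {t : Finset ι} (ht : t.Nonempty)
    (c : ι → ℝ) (v : ι → E) (x₀ : E) :
    ConvexOn ℝ Set.univ (fun x => t.sup' ht fun k => max (c k + ⟪v k, x - x₀⟫) 0) := by
  refine ConvexOn.finset_sup' ht fun k _ => ?_
  refine ((convexOn_inner_add_const convex_univ (v k) (c k - ⟪v k, x₀⟫)).sup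
    (convexOn_const 0 convex_univ)).congr fun x _ => ?_
  simp only [Pi.sup_apply, inner_sub_right]
  ring_nf

lemma ConvexOn.strongConvexOn_add_sq {s : Set E} {ψ : E → ℝ} (hψ : ConvexOn ℝ s ψ) (m : ℝ)
    (x₀ : E) : StrongConvexOn s m (fun x => ψ x + m / 2 * ‖x - x₀‖ ^ 2) := by
  rw [strongConvexOn_iff_convex]
  refine (hψ.add (convexOn_inner_add_const hψ.1 (-m • x₀) (m / 2 * ‖x₀‖ ^ 2))).congr fun x _ => ?_
  simp only [Pi.add_apply, norm_sub_sq_real, real_inner_smul_left, real_inner_comm x₀ x]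
  ring

lemma StrongConvexOn.add_sq_le_of_isMinOn {s : Set E} {m : ℝ} {f : E → ℝ} {x y : E}
    (hf : StrongConvexOn s m f) (hmin : IsMinOn f s x) (hx : x ∈ s) (hy : y ∈ s) :
    f x + m / 2 * ‖y - x‖ ^ 2 ≤ f y := by
  have hsegment : ∀ t ∈ Set.Ioc (0 : ℝ) 1, f x + (1 - t) * (m / 2 * ‖y - x‖ ^ 2) ≤ f y := by
    rintro t ⟨ht₀, ht₁⟩
    have hconv := hf.2 hx hy (sub_nonneg.2 ht₁) ht₀.le (by ring)
    have hle := hmin (hf.1 hx hy (sub_nonneg.2 ht₁) ht₀.le (by ring))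
    rw [norm_sub_rev] at hconv
    simp only [smul_eq_mul, Set.mem_ofPred_eq] at hconv hle
    nlinarith
  have hcont : Continuous fun t : ℝ => f x + (1 - t) * (m / 2 * ‖y - x‖ ^ 2) := by fun_prop
  have h0 : (0 : ℝ) ∈ closure (Set.Ioc 0 1) := by
    rw [closure_Ioc zero_ne_one]; exact Set.left_mem_Icc.2 zero_le_one
  simpa using ContinuousWithinAt.closure_le h0 hcont.continuousWithinAt continuousWithinAt_const
    hsegment

lemma Finset.sup'_max_zero_le_add {ι : Type*} {t : Finset ι} (ht : t.Nonempty) {a b : ι → ℝ}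
    {c : ℝ} (hc : 0 ≤ c) (hab : ∀ k ∈ t, a k ≤ b k + c) :
    t.sup' ht (fun k => max (a k) 0) ≤ t.sup' ht (fun k => max (b k) 0) + c := by
  refine Finset.sup'_le _ _ fun k hk => ?_
  have hb : max (b k) 0 ≤ t.sup' ht (fun k => max (b k) 0) :=
    Finset.le_sup' (fun k => max (b k) 0) hk
  exact max_le (by linarith [hab k hk, le_max_left (b k) 0]) (by linarith [le_max_right (b k) 0])

lemma norm_sub_sq_le_of_sq_le_inner_add {η C : ℝ} (hη : 0 < η) (hC : C ≤ 1 / (8 * η))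
    {a u v w : E} (h : 1 / (2 * η) * ‖w - v‖ ^ 2 ≤ ⟪a, v - w⟫ + C * ‖v - u‖ ^ 2) :
    ‖w - u‖ ^ 2 ≤ 8 * η ^ 2 * ‖a‖ ^ 2 + 3 * ‖v - u‖ ^ 2 := by
  have hYoung : ⟪a, v - w⟫ ≤ η * ‖a‖ ^ 2 + 1 / (4 * η) * ‖w - v‖ ^ 2 := by
    have hCS := real_inner_le_norm a (v - w)
    rw [norm_sub_rev] at hCS
    have := two_mul_le_add_sq (2 * η * ‖a‖) ‖w - v‖
    field_simp
    nlinarith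
  have hC' : C * ‖v - u‖ ^ 2 ≤ 1 / (8 * η) * ‖v - u‖ ^ 2 := by gcongr
  have hwv : ‖w - v‖ ^ 2 ≤ 4 * η ^ 2 * ‖a‖ ^ 2 + 1 / 2 * ‖v - u‖ ^ 2 := by
    have : 1 / (4 * η) * ‖w - v‖ ^ 2 ≤ η * ‖a‖ ^ 2 + 1 / (8 * η) * ‖v - u‖ ^ 2 := by
      have : 1 / (2 * η) = 1 / (4 * η) + 1 / (4 * η) := by field_simp; norm_num
      nlinarith
    field_simp at this ⊢
    nlinarith
  have hwu : ‖w - u‖ ^ 2 ≤ 2 * ‖w - v‖ ^ 2 + 2 * ‖v - u‖ ^ 2 := by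
    have := norm_add_le (w - v) (v - u)
    rw [sub_add_sub_cancel] at this
    nlinarith [two_mul_le_add_sq ‖w - v‖ ‖v - u‖, norm_nonneg (w - u)]
  linarith

variable [CompleteSpace E]

lemma ConvexOn.add_inner_gradient_le {g : E → ℝ} {G x : E} (hg : ConvexOn ℝ Set.univ g)
    (hG : HasGradientAt g G x) (y : E) : g x + ⟪G, y - x⟫ ≤ g y := by
  have hline : ConvexOn ℝ Set.univ (g ∘ AffineMap.lineMap (k := ℝ) x y) :=
    hg.comp_affineMap (AffineMap.lineMap (k := ℝ) x y)
  have hderiv : HasDerivAt (g ∘ AffineMap.lineMap (k := ℝ) x y) ⟪G, y - x⟫ 0 := by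
    have := (AffineMap.lineMap_apply_zero x y (k := ℝ)).symm ▸ hG.hasFDerivAt
    simpa using this.comp_hasDerivAt (0 : ℝ) AffineMap.hasDerivAt_lineMap
  have := hline.le_slope_of_hasDerivAt (Set.mem_univ 0) (Set.mem_univ 1) one_pos hderiv
  simp only [slope_def_field, Function.comp_apply, AffineMap.lineMap_apply_one,
    AffineMap.lineMap_apply_zero, sub_zero, div_one] at this
  linarith

lemma abs_sub_sub_inner_gradient_le {f : E → ℝ} {Gf : E → E} {L : ℝ}
    (hf : ∀ x, HasGradientAt f (Gf x) x) (hfL : ∀ u v, ‖Gf u - Gf v‖ ≤ L * ‖u - v‖) (u v : E) :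
    |f v - f u - ⟪Gf u, v - u⟫| ≤ L / 2 * ‖v - u‖ ^ 2 := by
  set w := v - u
  have hderiv : ∀ t : ℝ, HasDerivAt (fun t => f (u + t • w) - f u - t * ⟪Gf u, w⟫)
      ⟪Gf (u + t • w) - Gf u, w⟫ t := by
    intro t
    have hc : HasDerivAt (fun t : ℝ => u + t • w) w t := by
      simpa using ((hasDerivAt_id t).smul_const w).const_add u
    have := (((hf _).hasFDerivAt.comp_hasDerivAt t hc).sub_const (f u)).sub
      ((hasDerivAt_id t).mul_const ⟪Gf u, w⟫)
    exact this.congr_deriv (by simp [inner_sub_left])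
  have hbound : ∀ t ∈ Set.Ico (0 : ℝ) 1, ‖⟪Gf (u + t • w) - Gf u, w⟫‖ ≤ L * ‖w‖ ^ 2 * t := by
    rintro t ⟨ht, -⟩
    calc ‖⟪Gf (u + t • w) - Gf u, w⟫‖ ≤ ‖Gf (u + t • w) - Gf u‖ * ‖w‖ := norm_inner_le_norm _ _
      _ ≤ L * ‖t • w‖ * ‖w‖ := by gcongr; simpa using hfL (u + t • w) u
      _ = L * ‖w‖ ^ 2 * t := by rw [norm_smul, Real.norm_of_nonneg ht]; ring
  have := image_norm_le_of_norm_deriv_right_le_deriv_boundary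
    (fun t _ => (hderiv t).continuousAt.continuousWithinAt) (fun t _ => (hderiv t).hasDerivWithinAt)
    (B := fun t => L / 2 * ‖w‖ ^ 2 * t ^ 2) (by simp)
    (fun t => by simpa using ((hasDerivAt_pow 2 t).const_mul (L / 2 * ‖w‖ ^ 2))) ?_
    (Set.right_mem_Icc.2 zero_le_one)
  · simpa [w] using this
  · intro t ht
    convert hbound t ht using 1
    ring

end

/-- Prox-linear proximity lemma: the Moreau-type point `x̂` stays close to the iterate:
`‖x̂ − x₀‖² ≤ 8η²‖∇f(x₀) − y‖² + 3‖x̌ − x₀‖²`. -/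
theorem prox_linear_proximity {d m : ℕ} [NeZero m]
    (L γ η : ℝ) (hL : 0 < L) (hγ : 0 < γ) (hη : 0 < η)
    (hstep : η * L * (1 + γ) ≤ 1 / 8)
    (f : EuclideanSpace ℝ (Fin d) → ℝ)
    (Gf : EuclideanSpace ℝ (Fin d) → EuclideanSpace ℝ (Fin d))
    (hf : ∀ x, HasGradientAt f (Gf x) x)
    (hfL : ∀ u v, ‖Gf u - Gf v‖ ≤ L * ‖u - v‖)
    (h : EuclideanSpace ℝ (Fin d) → ℝ) (hh : ConvexOn ℝ Set.univ h)
    (g : Fin m → EuclideanSpace ℝ (Fin d) → ℝ)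
    (Gg : Fin m → EuclideanSpace ℝ (Fin d) → EuclideanSpace ℝ (Fin d))
    (hgconv : ∀ k, ConvexOn ℝ Set.univ (g k))
    (hg : ∀ k x, HasGradientAt (g k) (Gg k x) x)
    (hgL : ∀ k u v, ‖Gg k u - Gg k v‖ ≤ L * ‖u - v‖)
    (F : EuclideanSpace ℝ (Fin d) → ℝ)
    (hF : F = fun x => f x + h x +
      γ * Finset.univ.sup' Finset.univ_nonempty (fun k => max (g k x) 0))
    (x₀ y xv xh : EuclideanSpace ℝ (Fin d))
    (Φ : EuclideanSpace ℝ (Fin d) → ℝ)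
    (hΦ : Φ = fun x => ⟪y, x⟫ + h x
      + γ * Finset.univ.sup' Finset.univ_nonempty
          (fun k => max (g k x₀ + ⟪Gg k x₀, x - x₀⟫) 0)
      + 1 / (2 * η) * ‖x - x₀‖ ^ 2)
    (hxv : ∀ x, Φ xv ≤ Φ x)
    (hxh : ∀ u, F xh + (1 + η * L) / (2 * η) * ‖xh - x₀‖ ^ 2
      ≤ F u + (1 + η * L) / (2 * η) * ‖u - x₀‖ ^ 2) :
    ‖xh - x₀‖ ^ 2 ≤ 8 * η ^ 2 * ‖Gf x₀ - y‖ ^ 2 + 3 * ‖xv - x₀‖ ^ 2 := by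
  subst hF hΦ
  beta_reduce at hxv hxh
  set P : EuclideanSpace ℝ (Fin d) → ℝ := fun x =>
    Finset.univ.sup' Finset.univ_nonempty fun k => max (g k x) 0
  set Plin : EuclideanSpace ℝ (Fin d) → ℝ := fun x =>
    Finset.univ.sup' Finset.univ_nonempty fun k => max (g k x₀ + ⟪Gg k x₀, x - x₀⟫) 0
  have hψ : ConvexOn ℝ Set.univ fun x => ⟪y, x⟫ + h x + γ * Plin x :=
    ((convexOn_inner_add_const convex_univ y 0).add hh).add
      ((convexOn_sup'_max_zero_const_add_inner_sub Finset.univ_nonempty (fun k => g k x₀)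
        (fun k => Gg k x₀) x₀).smul hγ.le) |>.congr fun x _ => by simp [Plin]
  rw [show 1 / (2 * η) = (1 / η) / 2 by ring] at hxv
  have hxv_strong := (hψ.strongConvexOn_add_sq (1 / η) x₀).add_sq_le_of_isMinOn
    (isMinOn_univ_iff.2 hxv) (Set.mem_univ xv) (Set.mem_univ xh)
  have hxh_xv := hxh xv
  rw [show (1 + η * L) / (2 * η) = (1 / η) / 2 + L / 2 by field_simp] at hxh_xv
  have hf_xv := (abs_le.1 (abs_sub_sub_inner_gradient_le hf hfL x₀ xv)).2
  have hf_xh := (abs_le.1 (abs_sub_sub_inner_gradient_le hf hfL x₀ xh)).1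
  have hP_xv : P xv ≤ Plin xv + L / 2 * ‖xv - x₀‖ ^ 2 :=
    Finset.univ.sup'_max_zero_le_add _ (by positivity) fun k _ => by
      linarith [abs_le.1 (abs_sub_sub_inner_gradient_le (hg k) (hgL k) x₀ xv)]
  have hP_xh : Plin xh ≤ P xh := Finset.sup'_mono_fun fun k _ =>
    max_le_max ((hgconv k).add_inner_gradient_le (hg k x₀) xh) le_rfl
  refine norm_sub_sq_le_of_sq_le_inner_add hη (C := L / 2 * (2 + γ)) ?_ ?_
  · rw [le_div_iff₀ (by positivity)]; nlinarith
  · have hinner : ⟪Gf x₀, xv - x₀⟫ - ⟪Gf x₀, xh - x₀⟫ + ⟪y, xh⟫ - ⟪y, xv⟫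
        = ⟪Gf x₀ - y, xv - xh⟫ := by
      simp only [inner_sub_left, inner_sub_right]; ring
    beta_reduce at hxv_strong
    linear_combination hxv_strong + hxh_xv + hf_xv + hf_xh + mul_le_mul_of_nonneg_left hP_xv hγ.le
      + mul_le_mul_of_nonneg_left hP_xh hγ.le + hinner
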